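/- arXiv:2408.13806 — 3 statements merged into one kernel-verified Lean document; each statement's English description precedes it below -/
import Mathlib

section
/- Fix a positive integer n and nonnegative integers d_1,…,d_n. For every nonnegative integer A, the sum C^{d_1,…,d_n}(A) = ∑_{a_1+⋯+a_n = A, a_i ≥ 0} a_1^{\underline{d_1}} ⋯ a_n^{\underline{d_n}} equals (d_1!⋯d_n! / (D+n-1)!) · (A+n-1)^{\underline{D+n-1}} where D = d_1+⋯+d_n. -/
open Finset

lemma hockey (i : ℕ) : ∀ M j : ℕ,
    ∑ p ∈ Finset.HasAntidiagonal.antidiagonal M, (p.1).choose i * (p.2).choose j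
      = (M + 1).choose (i + j + 1) := by
  intro M
  induction M with
  | zero =>
    intro j
    rcases i with _ | i <;> rcases j with _ | j <;>
      simp [Nat.choose_eq_zero_of_lt, Nat.succ_lt_succ]
  | succ M ih =>
    intro j
    rw [Finset.Nat.sum_antidiagonal_succ']
    rcases j with _ | j
    · simp only [Nat.choose_zero_right, Nat.mul_one]
      have : ∑ p ∈ Finset.HasAntidiagonal.antidiagonal M, (p.1).choose i
          = ∑ p ∈ Finset.HasAntidiagonal.antidiagonal M, (p.1).choose i * (p.2).choose 0 := by
        simp
      rw [this, ih 0]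
      exact (Nat.choose_succ_succ (M + 1) i).symm
    · rw [Nat.choose_zero_succ, Nat.mul_zero, Nat.zero_add]
      have : ∀ p ∈ Finset.HasAntidiagonal.antidiagonal M,
          (p.1).choose i * (p.2 + 1).choose (j + 1)
            = (p.1).choose i * (p.2).choose j + (p.1).choose i * (p.2).choose (j + 1) := by
        intro p _
        rw [Nat.choose_succ_succ, Nat.mul_add]
      rw [Finset.sum_congr rfl this, Finset.sum_add_distrib, ih j, ih (j + 1),
        show i + (j + 1) + 1 = (i + j + 1) + 1 by omega]
      exact (Nat.choose_succ_succ (M + 1) (i + j + 1)).symm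

lemma hockey' : ∀ (m i j A : ℕ),
    ∑ p ∈ Finset.HasAntidiagonal.antidiagonal A, (p.1).choose i * (p.2 + m).choose (j + m)
      = (A + m + 1).choose (i + j + m + 1) := by
  intro m
  induction m with
  | zero => intro i j A; simpa using hockey i A j
  | succ m ih =>
    intro i j A
    have : ∀ p ∈ Finset.HasAntidiagonal.antidiagonal A,
        (p.1).choose i * (p.2 + (m + 1)).choose (j + (m + 1))
          = (p.1).choose i * (p.2 + m).choose (j + m)
            + (p.1).choose i * (p.2 + m).choose ((j + 1) + m) := by
      intro p _
      rw [show p.2 + (m + 1) = (p.2 + m) + 1 by omega,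
        show j + (m + 1) = (j + m) + 1 by omega, Nat.choose_succ_succ, Nat.mul_add,
        Nat.succ_eq_add_one, show (j + m) + 1 = (j + 1) + m by omega]
    rw [Finset.sum_congr rfl this, Finset.sum_add_distrib, ih i j A, ih i (j + 1) A,
      show i + (j + 1) + m + 1 = (i + j + m + 1) + 1 by omega]
    exact (Nat.choose_succ_succ (A + m + 1) (i + j + m + 1)).symm

lemma sum_antidiagonalTuple_succ {M : Type*} [AddCommMonoid M] (n A : ℕ)
    (f : (Fin (n + 1) → ℕ) → M) :
    ∑ a ∈ Finset.Nat.antidiagonalTuple (n + 1) A, f a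
      = ∑ p ∈ Finset.HasAntidiagonal.antidiagonal A, ∑ x ∈ Finset.Nat.antidiagonalTuple n p.2,
          f (Fin.cons p.1 x) := by
  rw [Finset.sum_sigma']
  refine Finset.sum_nbij'
    (fun (a : Fin (n + 1) → ℕ) => (⟨(a 0, ∑ i : Fin n, a i.succ), Fin.tail a⟩ :
        (_ : ℕ × ℕ) × (Fin n → ℕ)))
    (fun (q : (_ : ℕ × ℕ) × (Fin n → ℕ)) => Fin.cons q.1.1 q.2) ?_ ?_ ?_ ?_ ?_
  · intro a ha
    simp only [Finset.Nat.mem_antidiagonalTuple, Finset.mem_sigma,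
      Finset.HasAntidiagonal.mem_antidiagonal] at ha ⊢
    constructor
    · rw [← ha, Fin.sum_univ_succ]
    · rfl
  · rintro ⟨p, x⟩ hq
    simp only [Finset.mem_sigma, Finset.HasAntidiagonal.mem_antidiagonal,
      Finset.Nat.mem_antidiagonalTuple] at hq ⊢
    rw [Fin.sum_cons, hq.2, hq.1]
  · intro a ha
    simp [Fin.cons_self_tail]
  · rintro ⟨p, x⟩ hq
    simp only [Finset.mem_sigma, Finset.mem_antidiagonal,
      Finset.Nat.mem_antidiagonalTuple] at hq
    refine Sigma.ext ?_ (heq_of_eq ?_)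
    · simp only [Fin.cons_zero]
      refine Prod.ext rfl ?_
      simp only
      have : (∑ i : Fin n, (Fin.cons p.1 x : Fin (n + 1) → ℕ) i.succ) = ∑ i, x i :=
        Finset.sum_congr rfl fun i _ => by simp
      rw [this, hq.2]
    · simp [Fin.tail_cons]
  · intro a ha
    rw [Fin.cons_self_tail]

lemma keyN : ∀ n : ℕ, 0 < n → ∀ (d : Fin n → ℕ) (A : ℕ),
    ∑ a ∈ Finset.Nat.antidiagonalTuple n A, ∏ i, (a i).choose (d i)
      = (A + n - 1).choose ((∑ i, d i) + n - 1) := by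
  intro n
  induction n with
  | zero => omega
  | succ n ih =>
    intro _ d A
    rcases Nat.eq_zero_or_pos n with rfl | hn
    · simp [Finset.Nat.antidiagonalTuple_one]
    · rw [sum_antidiagonalTuple_succ]
      have step : ∀ p ∈ Finset.HasAntidiagonal.antidiagonal A,
          (∑ x ∈ Finset.Nat.antidiagonalTuple n p.2, ∏ i, ((Fin.cons p.1 x : Fin (n + 1) → ℕ) i).choose (d i))
            = (p.1).choose (d 0) * (p.2 + (n - 1)).choose
                ((∑ i : Fin n, d i.succ) + (n - 1)) := by
        intro p _
        rw [show p.2 + (n - 1) = p.2 + n - 1 by omega,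
          show (∑ i : Fin n, d i.succ) + (n - 1) = (∑ i : Fin n, d i.succ) + n - 1 by omega,
          ← ih hn (fun i => d i.succ) p.2, Finset.mul_sum]
        refine Finset.sum_congr rfl fun x _ => ?_
        rw [Fin.prod_univ_succ]
        simp
      rw [Finset.sum_congr rfl step, hockey' (n - 1) (d 0) (∑ i : Fin n, d i.succ) A,
        show A + (n - 1) + 1 = A + (n + 1) - 1 by omega,
        show d 0 + (∑ i : Fin n, d i.succ) + (n - 1) + 1 = (∑ i, d i) + (n + 1) - 1 from ?_]
      rw [Fin.sum_univ_succ]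
      omega


/-- For `n ≥ 1` and nonnegative integers `d_1,…,d_n`, the sum
`C^{d_1,…,d_n}(A) = ∑_{a_1+⋯+a_n=A, a_i≥0} a_1^{\underline{d_1}}⋯a_n^{\underline{d_n}}`
equals `(d_1!⋯d_n!/(D+n-1)!) (A+n-1)^{\underline{D+n-1}}` where `D = ∑ d_i`. -/
theorem ehrhart_falling_factorial_sum (n : ℕ) (hn : 0 < n) (d : Fin n → ℕ) (A : ℕ) :
    (∑ a ∈ Finset.Nat.antidiagonalTuple n A, ∏ i, ((a i).descFactorial (d i) : ℚ)) =
      ((∏ i, Nat.factorial (d i) : ℕ) : ℚ) /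
          ((Nat.factorial ((∑ i, d i) + n - 1)) : ℚ) *
        (((A + n - 1).descFactorial ((∑ i, d i) + n - 1)) : ℚ) := by
  have hkey := keyN n hn d A
  have hcast : (∑ a ∈ Finset.Nat.antidiagonalTuple n A, ∏ i, (((a i).choose (d i) : ℕ) : ℚ))
      = (((A + n - 1).choose ((∑ i, d i) + n - 1) : ℕ) : ℚ) := by
    exact_mod_cast congrArg (Nat.cast : ℕ → ℚ) hkey
  have hF : ((Nat.factorial ((∑ i, d i) + n - 1) : ℕ) : ℚ) ≠ 0 :=
    Nat.cast_ne_zero.mpr (Nat.factorial_ne_zero _)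
  calc (∑ a ∈ Finset.Nat.antidiagonalTuple n A, ∏ i, ((a i).descFactorial (d i) : ℚ))
      = ∑ a ∈ Finset.Nat.antidiagonalTuple n A,
          ∏ i, (((Nat.factorial (d i) : ℕ) : ℚ) * (((a i).choose (d i) : ℕ) : ℚ)) := by
        refine Finset.sum_congr rfl fun a _ => Finset.prod_congr rfl fun i _ => ?_
        rw [Nat.descFactorial_eq_factorial_mul_choose]
        push_cast
        ring
    _ = ∑ a ∈ Finset.Nat.antidiagonalTuple n A,
          (∏ i, ((Nat.factorial (d i) : ℕ) : ℚ)) * ∏ i, (((a i).choose (d i) : ℕ) : ℚ) := by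
        refine Finset.sum_congr rfl fun a _ => ?_
        rw [Finset.prod_mul_distrib]
    _ = (∏ i, ((Nat.factorial (d i) : ℕ) : ℚ)) *
          (((A + n - 1).choose ((∑ i, d i) + n - 1) : ℕ) : ℚ) := by
        rw [← Finset.mul_sum, hcast]
    _ = ((∏ i, Nat.factorial (d i) : ℕ) : ℚ) /
          ((Nat.factorial ((∑ i, d i) + n - 1)) : ℚ) *
        (((A + n - 1).descFactorial ((∑ i, d i) + n - 1)) : ℚ) := by
        rw [Nat.descFactorial_eq_factorial_mul_choose]
        push_cast
        field_simp
end

section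
/- Let P = ∑_{i≥0} f_i u_0^i / x^n be a singular differential polynomial depending only on u_0 and a power x^{-n} with n > 0. If the Poisson bracket {∫P dx, ∫(u^3/6) dx} (which equals ∫ (∑_i i f_i u_0^{i-1} u_1 / x^n · u_0 + …) dx, i.e. the local functional of ∑_{i} i f_i u_0^{i} u_1 / x^n up to total derivatives) vanishes as a singular local functional, then f_i = 0 for all i ≥ 1. -/
open MvPolynomial

/-- Singular differential polynomials: polynomials in the variables `u_k` (`some k`)
and `t = 1/x` (`none`). The derivation `∂_x = ∂/∂x + ∑_{k≥0} u_{k+1} ∂/∂u_k`: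
it sends `u_k ↦ u_{k+1}` and `t = x⁻¹ ↦ -x⁻² = -t²`. -/
noncomputable def singDx (f : MvPolynomial (Option ℕ) ℂ) : MvPolynomial (Option ℕ) ℂ :=
  ∑ v ∈ f.vars,
    (match v with
      | none => -(MvPolynomial.X (none : Option ℕ)) ^ 2
      | some k => MvPolynomial.X (some (k + 1))) * MvPolynomial.pderiv v f

namespace SingAux

/-- The coefficient polynomial of `∂_v` inside `singDx`. -/
noncomputable def mcoef : Option ℕ → MvPolynomial (Option ℕ) ℂ
  | none => -(MvPolynomial.X (none : Option ℕ)) ^ 2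
  | some k => MvPolynomial.X (some (k + 1))

lemma singDx_eq_sum (f : MvPolynomial (Option ℕ) ℂ) (S : Finset (Option ℕ))
    (hS : f.vars ⊆ S) :
    singDx f = ∑ v ∈ S, mcoef v * MvPolynomial.pderiv v f := by
  have h0 : singDx f = ∑ v ∈ f.vars, mcoef v * MvPolynomial.pderiv v f := by
    rw [singDx]
    exact Finset.sum_congr rfl fun v _ => by cases v <;> rfl
  rw [h0]
  exact Finset.sum_subset hS fun v _ hv => by
    rw [MvPolynomial.pderiv_eq_zero_of_notMem_vars hv, mul_zero]

/-- The target algebra: group algebra of `ℂ × ℕ`, where `(μ, d)` records a monomial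
`x^μ s^d` (`μ` = exponent of `x` after the substitution `u(x) = x^λ`,
`d` = total degree in the variables `u_k`). -/
abbrev A : Type := AddMonoidAlgebra ℂ (ℂ × ℕ)

/-- `d/dx` on `A`: `x^μ s^d ↦ μ x^(μ-1) s^d`. -/
noncomputable def D (p : A) : A :=
  p.coeff.sum fun m a => AddMonoidAlgebra.single (m.1 - 1, m.2) (a * m.1)

lemma D_single (m : ℂ × ℕ) (a : ℂ) :
    D (AddMonoidAlgebra.single m a) = AddMonoidAlgebra.single (m.1 - 1, m.2) (a * m.1) := by
  rw [D, AddMonoidAlgebra.coeff_single, Finsupp.sum_single_index]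
  simp

lemma D_zero : D 0 = 0 := by
  simp [D]

lemma D_add (p q : A) : D (p + q) = D p + D q := by
  rw [D, D, D, AddMonoidAlgebra.coeff_add, Finsupp.sum_add_index] <;> simp [add_mul, AddMonoidAlgebra.single_add]

lemma D_single_mul_single (m m' : ℂ × ℕ) (a b : ℂ) :
    D (AddMonoidAlgebra.single m a * AddMonoidAlgebra.single m' b) =
      D (AddMonoidAlgebra.single m a) * AddMonoidAlgebra.single m' b +
        AddMonoidAlgebra.single m a * D (AddMonoidAlgebra.single m' b) := by
  rw [AddMonoidAlgebra.single_mul_single, D_single, D_single, D_single,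
    AddMonoidAlgebra.single_mul_single, AddMonoidAlgebra.single_mul_single]
  have h1 : ((m.1 - 1, m.2) + m' : ℂ × ℕ) = ((m + m').1 - 1, (m + m').2) := by
    simp only [Prod.ext_iff, Prod.fst_add, Prod.snd_add]
    exact ⟨by ring, trivial⟩
  have h2 : (m + (m'.1 - 1, m'.2) : ℂ × ℕ) = ((m + m').1 - 1, (m + m').2) := by
    simp only [Prod.ext_iff, Prod.fst_add, Prod.snd_add]
    exact ⟨by ring, trivial⟩
  rw [h1, h2, ← AddMonoidAlgebra.single_add]
  congr 1
  simp only [Prod.fst_add]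
  ring

lemma D_single_mul (m : ℂ × ℕ) (a : ℂ) (q : A) :
    D (AddMonoidAlgebra.single m a * q) =
      D (AddMonoidAlgebra.single m a) * q + AddMonoidAlgebra.single m a * D q := by
  induction q using AddMonoidAlgebra.induction with
  | zero => simp [D_zero]
  | single_add m' b q hm hb ih =>
    rw [mul_add, D_add, ih, D_add, mul_add, mul_add, D_single_mul_single]
    abel

lemma D_mul (p q : A) : D (p * q) = D p * q + p * D q := by
  induction p using AddMonoidAlgebra.induction with
  | zero => simp [D_zero]
  | single_add m a p hm ha ih =>
    rw [add_mul, D_add, ih, D_add, D_single_mul, add_mul]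
    ring

/-- The residue-type functional: `D p` has vanishing coefficient at `(-1, d)`. -/
lemma D_apply_neg_one (p : A) (d : ℕ) : (D p).coeff ((-1 : ℂ), d) = 0 := by
  rw [D, AddMonoidAlgebra.coeff_finsuppSum, Finsupp.sum_apply]
  refine Finset.sum_eq_zero fun m _ => ?_
  simp only [AddMonoidAlgebra.coeff_single, Finsupp.single_apply]
  split_ifs with hc
  · have hm1 : m.1 = 0 := by
      have h' : m.1 - 1 = -1 := congrArg Prod.fst hc
      linear_combination h'
    rw [hm1, mul_zero]
  · rfl

/-- The substitution `u(x) = x^l`: `u_k ↦ (∏_{j<k} (l-j)) x^(l-k) s`, `t ↦ x⁻¹`. -/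
noncomputable def phi (l : ℂ) : MvPolynomial (Option ℕ) ℂ →ₐ[ℂ] A :=
  MvPolynomial.aeval fun v =>
    match v with
    | none => AddMonoidAlgebra.single ((-1 : ℂ), 0) 1
    | some k => AddMonoidAlgebra.single (l - k, 1) (∏ j ∈ Finset.range k, (l - j))

lemma phi_X_none (l : ℂ) :
    phi l (MvPolynomial.X (none : Option ℕ)) = AddMonoidAlgebra.single ((-1 : ℂ), 0) 1 := by
  rw [phi, MvPolynomial.aeval_X]

lemma phi_X_some (l : ℂ) (k : ℕ) :
    phi l (MvPolynomial.X (some k)) =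
      AddMonoidAlgebra.single (l - k, 1) (∏ j ∈ Finset.range k, (l - j)) := by
  rw [phi, MvPolynomial.aeval_X]

lemma phi_C (l : ℂ) (a : ℂ) :
    phi l (MvPolynomial.C a) = AddMonoidAlgebra.single (0 : ℂ × ℕ) a := by
  rw [MvPolynomial.algHom_C]; rfl

/-- `phi` of the coefficient of `∂_v` is `D` of `phi` of `X v`. -/
lemma phi_mcoef (l : ℂ) (v : Option ℕ) : phi l (mcoef v) = D (phi l (MvPolynomial.X v)) := by
  cases v with
  | none =>
    rw [mcoef, phi_X_none, D_single, map_neg, map_pow, phi_X_none,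
      AddMonoidAlgebra.single_pow]
    simp [Prod.ext_iff]
    norm_num
  | some k =>
    rw [mcoef, phi_X_some, phi_X_some, D_single]
    have h1 : l - (↑(k + 1) : ℂ) = l - ↑k - 1 := by push_cast; ring
    rw [Finset.prod_range_succ, h1]

/-- Key intertwining: `phi ∘ singDx = D ∘ phi`. -/
lemma phi_singDx (l : ℂ) (f : MvPolynomial (Option ℕ) ℂ) :
    phi l (singDx f) = D (phi l f) := by
  induction f using MvPolynomial.induction_on with
  | C a =>
    rw [singDx_eq_sum (MvPolynomial.C a) ∅ (by simp [MvPolynomial.vars_C]),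
      Finset.sum_empty, map_zero, phi_C, D_single]
    simp
  | add p q hp hq =>
    have hsum : singDx (p + q) = singDx p + singDx q := by
      classical
      rw [singDx_eq_sum (p + q) (p.vars ∪ q.vars) (MvPolynomial.vars_add_subset p q),
        singDx_eq_sum p (p.vars ∪ q.vars) Finset.subset_union_left,
        singDx_eq_sum q (p.vars ∪ q.vars) Finset.subset_union_right,
        ← Finset.sum_add_distrib]
      refine Finset.sum_congr rfl fun v _ => ?_
      rw [map_add, mul_add]
    rw [hsum, map_add, hp, hq, map_add, D_add]
  | mul_X p v hp =>
    classical
    have hsum : singDx (p * MvPolynomial.X v) = singDx p * MvPolynomial.X v + p * mcoef v := by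
      set S : Finset (Option ℕ) := insert v ((p * MvPolynomial.X v).vars ∪ p.vars) with hSdef
      have hS1 : (p * MvPolynomial.X v).vars ⊆ S :=
        fun w hw => Finset.mem_insert_of_mem (Finset.mem_union_left _ hw)
      have hS2 : p.vars ⊆ S :=
        fun w hw => Finset.mem_insert_of_mem (Finset.mem_union_right _ hw)
      have hvS : v ∈ S := Finset.mem_insert_self _ _
      have key : ∀ w ∈ S,
          mcoef w * (MvPolynomial.pderiv w) (p * MvPolynomial.X v) =
            mcoef w * (MvPolynomial.pderiv w) p * MvPolynomial.X v +
              (if w = v then p * mcoef v else 0) := by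
        intro w _
        rw [Derivation.leibniz]
        by_cases hwv : w = v
        · subst hwv
          rw [if_pos rfl, MvPolynomial.pderiv_X, Pi.single_eq_same]
          simp only [smul_eq_mul, mul_one]
          ring
        · rw [if_neg hwv, MvPolynomial.pderiv_X,
            Pi.single_eq_of_ne (fun e => hwv e.symm), smul_zero, zero_add, add_zero,
            smul_eq_mul]
          ring
      calc singDx (p * MvPolynomial.X v)
          = ∑ w ∈ S, mcoef w * (MvPolynomial.pderiv w) (p * MvPolynomial.X v) :=
            singDx_eq_sum _ S hS1
        _ = ∑ w ∈ S, (mcoef w * (MvPolynomial.pderiv w) p * MvPolynomial.X v +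
              (if w = v then p * mcoef v else 0)) := Finset.sum_congr rfl key
        _ = (∑ w ∈ S, mcoef w * (MvPolynomial.pderiv w) p * MvPolynomial.X v) +
              ∑ w ∈ S, (if w = v then p * mcoef v else 0) := Finset.sum_add_distrib
        _ = singDx p * MvPolynomial.X v + p * mcoef v := by
            rw [← Finset.sum_mul, ← singDx_eq_sum p S hS2, Finset.sum_ite_eq' S v
              (fun _ => p * mcoef v), if_pos hvS]
    rw [hsum, map_add, map_mul, map_mul, hp, phi_mcoef, map_mul, D_mul]

end SingAux

/-- Let `P = ∑_i f_i u_0^i / x^n` with `n > 0`. If the Poisson bracket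
`{∫P dx, ∫ u³/6 dx}`, which is the singular local functional of
`∑_i i f_i u_0^i u_1 / x^n`, vanishes — i.e. this singular differential polynomial lies in
`Im(∂_x) ⊕ ℂ ⊕ ℂ·x⁻¹` — then `f_i = 0` for all `i ≥ 1`. -/
theorem bracket_vanishing_forces_coefficients_zero (n : ℕ) (hn : 0 < n) (f : ℕ →₀ ℂ)
    (h : ∃ (g : MvPolynomial (Option ℕ) ℂ) (a b : ℂ),
      ∑ i ∈ f.support,
          MvPolynomial.C ((i : ℂ) * f i) * (MvPolynomial.X (some 0)) ^ i *
            MvPolynomial.X (some 1) * (MvPolynomial.X (none : Option ℕ)) ^ n =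
        singDx g + MvPolynomial.C a + MvPolynomial.C b * MvPolynomial.X (none : Option ℕ)) :
    ∀ i : ℕ, 1 ≤ i → f i = 0 := by
  intro i hi
  by_cases hmem : i ∈ f.support
  swap
  · exact Finsupp.notMem_support_iff.mp hmem
  obtain ⟨g, a, b, heq⟩ := h
  set l : ℂ := (n : ℂ) / ((i : ℂ) + 1) with hl
  have hi1 : ((i : ℂ) + 1) ≠ 0 := Nat.cast_add_one_ne_zero i
  have hln : ((i : ℂ) + 1) * l = n := by
    rw [hl]; field_simp
  have hl0 : l ≠ 0 := by
    rw [hl]; exact div_ne_zero (Nat.cast_ne_zero.mpr hn.ne') hi1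
  have H : (SingAux.phi l (∑ j ∈ f.support,
        MvPolynomial.C ((j : ℂ) * f j) * (MvPolynomial.X (some 0)) ^ j *
          MvPolynomial.X (some 1) * (MvPolynomial.X (none : Option ℕ)) ^ n)).coeff ((-1 : ℂ), i + 1)
      = (SingAux.phi l (singDx g + MvPolynomial.C a +
          MvPolynomial.C b * MvPolynomial.X (none : Option ℕ))).coeff ((-1 : ℂ), i + 1) := by
    rw [heq]
  -- right-hand side is zero
  rw [map_add, map_add, map_mul, SingAux.phi_singDx, SingAux.phi_C, SingAux.phi_C,
    SingAux.phi_X_none, AddMonoidAlgebra.single_mul_single, AddMonoidAlgebra.coeff_add, Finsupp.add_apply,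
    AddMonoidAlgebra.coeff_add, Finsupp.add_apply, SingAux.D_apply_neg_one] at H
  have hz1 : (AddMonoidAlgebra.single (0 : ℂ × ℕ) a).coeff ((-1 : ℂ), i + 1) = 0 := by
    rw [AddMonoidAlgebra.coeff_single, Finsupp.single_apply, if_neg]
    intro hc
    have : (0 : ℂ) = -1 := congrArg Prod.fst hc
    norm_num at this
  have hz2 : (AddMonoidAlgebra.single ((0 : ℂ × ℕ) + ((-1 : ℂ), 0)) (b * 1)).coeff
      ((-1 : ℂ), i + 1) = 0 := by
    rw [AddMonoidAlgebra.coeff_single, Finsupp.single_apply, if_neg]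
    intro hc
    have : (0 : ℕ) = i + 1 := congrArg Prod.snd hc
    omega
  rw [hz1, hz2] at H
  -- left-hand side
  have hterm : ∀ j : ℕ,
      SingAux.phi l (MvPolynomial.C ((j : ℂ) * f j) * (MvPolynomial.X (some 0)) ^ j *
          MvPolynomial.X (some 1) * (MvPolynomial.X (none : Option ℕ)) ^ n)
        = AddMonoidAlgebra.single ((j : ℂ) * l + l - 1 - n, j + 1) ((j : ℂ) * f j * l) := by
    intro j
    rw [map_mul, map_mul, map_mul, map_pow, map_pow, SingAux.phi_C, SingAux.phi_X_some,
      SingAux.phi_X_some, SingAux.phi_X_none, AddMonoidAlgebra.single_pow,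
      AddMonoidAlgebra.single_pow, AddMonoidAlgebra.single_mul_single,
      AddMonoidAlgebra.single_mul_single, AddMonoidAlgebra.single_mul_single]
    congr 1
    · simp only [Prod.ext_iff, Prod.fst_add, Prod.snd_add, Prod.fst_zero, Prod.snd_zero,
        Prod.smul_mk, smul_eq_mul, nsmul_eq_mul, Nat.cast_zero, Nat.cast_one,
        Finset.prod_range_zero, Finset.prod_range_one, sub_zero, mul_one, mul_zero,
        zero_add, add_zero, smul_zero]
      constructor
      · ring
      · trivial
    · simp only [Finset.prod_range_zero, Finset.prod_range_one, Nat.cast_zero, sub_zero,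
        one_pow, one_mul, mul_one]
  rw [map_sum] at H
  have Hsum : ∑ j ∈ f.support,
      (SingAux.phi l (MvPolynomial.C ((j : ℂ) * f j) * (MvPolynomial.X (some 0)) ^ j *
          MvPolynomial.X (some 1) * (MvPolynomial.X (none : Option ℕ)) ^ n)).coeff
        ((-1 : ℂ), i + 1) = (i : ℂ) * f i * l := by
    rw [Finset.sum_eq_single_of_mem i hmem]
    · rw [hterm i, AddMonoidAlgebra.coeff_single, Finsupp.single_apply, if_pos]
      have h1 : (i : ℂ) * l + l - 1 - n = -1 := by
        have : (i : ℂ) * l + l = (n : ℂ) := by rw [← hln]; ring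
        rw [this]; ring
      exact Prod.ext h1 rfl
    · intro j _ hji
      rw [hterm j, AddMonoidAlgebra.coeff_single, Finsupp.single_apply, if_neg]
      intro hc
      have : j + 1 = i + 1 := congrArg Prod.snd hc
      omega
  rw [AddMonoidAlgebra.coeff_sum, Finsupp.finset_sum_apply, Hsum] at H
  have : (i : ℂ) ≠ 0 := Nat.cast_ne_zero.mpr (by omega)
  have hfin : (i : ℂ) * f i * l = 0 := by rw [H]; ring
  rcases mul_eq_zero.mp hfin with h1 | h1
  · rcases mul_eq_zero.mp h1 with h2 | h2
    · exact absurd h2 this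
    · exact h2
  · exact absurd h1 hl0
end

section
/- The singular local functionals ∫ u_0^n u_1 x^{-m} dx for n ≥ 1, m ≥ 1 are linearly independent; i.e., if a finite linear combination ∑ c_{n,m} u_0^n u_1 x^{-m} lies in Im(∂_x) ⊕ ℂ ⊕ ℂ·x^{-1} inside ℂ[[u_0]][u_1,u_2,…,x^{-1}], then all c_{n,m} = 0. -/
open MvPolynomial

namespace SingAux

noncomputable def W : Option ℕ → MvPolynomial (Option ℕ) ℂ
  | none => -(MvPolynomial.X (none : Option ℕ)) ^ 2
  | some k => MvPolynomial.X (some (k + 1))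

lemma W_some (k : ℕ) : W (some k) = MvPolynomial.X (some (k + 1)) := rfl
lemma W_none : W none = -(MvPolynomial.X (none : Option ℕ)) ^ 2 := rfl

noncomputable def der : Derivation ℂ (MvPolynomial (Option ℕ) ℂ) (MvPolynomial (Option ℕ) ℂ) :=
  mkDerivation ℂ W

@[simp] lemma der_X (v : Option ℕ) : der (MvPolynomial.X v) = W v := mkDerivation_X ℂ W v

lemma singDx_def (f : MvPolynomial (Option ℕ) ℂ) :
    singDx f = ∑ v ∈ f.vars, W v * MvPolynomial.pderiv v f := by
  unfold singDx
  refine Finset.sum_congr rfl fun v _ => ?_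
  cases v <;> rfl

lemma singDx_subset (f : MvPolynomial (Option ℕ) ℂ) {S : Finset (Option ℕ)}
    (h : f.vars ⊆ S) : singDx f = ∑ v ∈ S, W v * MvPolynomial.pderiv v f := by
  rw [singDx_def]
  exact Finset.sum_subset h fun v _ hv => by
    rw [pderiv_eq_zero_of_notMem_vars hv, mul_zero]

lemma singDx_eq_der (f : MvPolynomial (Option ℕ) ℂ) : singDx f = der f := by
  induction f using MvPolynomial.induction_on with
  | C a =>
      rw [singDx_def]
      simp [der, vars_C]
  | add p q hp hq =>
      have hS1 : (p + q).vars ⊆ (p + q).vars ∪ p.vars ∪ q.vars :=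
        Finset.subset_union_left.trans Finset.subset_union_left
      have hS2 : p.vars ⊆ (p + q).vars ∪ p.vars ∪ q.vars :=
        Finset.subset_union_right.trans Finset.subset_union_left
      have hS3 : q.vars ⊆ (p + q).vars ∪ p.vars ∪ q.vars :=
        Finset.subset_union_right
      rw [singDx_subset _ hS1, map_add, ← hp, ← hq, singDx_subset p hS2, singDx_subset q hS3,
        ← Finset.sum_add_distrib]
      refine Finset.sum_congr rfl fun v _ => ?_
      rw [map_add, mul_add]
  | mul_X p i hp =>
      have hS1 : (p * MvPolynomial.X i).vars ⊆ (p * MvPolynomial.X i).vars ∪ p.vars ∪ {i} :=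
        Finset.subset_union_left.trans Finset.subset_union_left
      have hS2 : p.vars ⊆ (p * MvPolynomial.X i).vars ∪ p.vars ∪ {i} :=
        Finset.subset_union_right.trans Finset.subset_union_left
      have hiS : i ∈ (p * MvPolynomial.X i).vars ∪ p.vars ∪ {i} := by
        simp
      rw [singDx_subset _ hS1]
      have hterm : ∀ v ∈ (p * MvPolynomial.X i).vars ∪ p.vars ∪ {i},
          W v * MvPolynomial.pderiv v (p * MvPolynomial.X i)
            = W v * MvPolynomial.pderiv v p * MvPolynomial.X i
              + W v * (p * MvPolynomial.pderiv v (MvPolynomial.X i)) := by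
        intro v _
        rw [pderiv_mul]; ring
      rw [Finset.sum_congr rfl hterm, Finset.sum_add_distrib]
      have h2 : ∑ v ∈ (p * MvPolynomial.X i).vars ∪ p.vars ∪ {i},
          W v * (p * MvPolynomial.pderiv v (MvPolynomial.X i)) = W i * p := by
        rw [Finset.sum_eq_single i]
        · simp
        · intro v _ hv
          rw [pderiv_X_of_ne (Ne.symm hv)]
          simp
        · exact fun h => absurd hiS h
      rw [h2, ← Finset.sum_mul, ← singDx_subset p hS2, hp]
      rw [Derivation.leibniz, smul_eq_mul, smul_eq_mul, der_X]
      ring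

lemma pd_der_zero (f : MvPolynomial (Option ℕ) ℂ) :
    MvPolynomial.pderiv (some 0) (der f) = der (MvPolynomial.pderiv (some 0) f) := by
  have h : ⁅(MvPolynomial.pderiv (σ := Option ℕ) (R := ℂ) (some 0)), der⁆ = 0 := by
    apply derivation_ext
    intro v
    rw [Derivation.commutator_apply]
    cases v with
    | none =>
        rw [der_X]
        show MvPolynomial.pderiv (some 0) (W none)
          - der (MvPolynomial.pderiv (some 0) (MvPolynomial.X (none : Option ℕ))) = _
        rw [pderiv_X_of_ne (by simp), W_none]
        simp [pderiv_pow, pderiv_X_of_ne]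
    | some j =>
        rw [der_X]
        show MvPolynomial.pderiv (some 0) (W (some j))
          - der (MvPolynomial.pderiv (some 0) (MvPolynomial.X (some j))) = _
        have hW : MvPolynomial.pderiv (some 0) (W (some j)) = 0 := by
          rw [W_some]
          exact pderiv_X_of_ne (fun hc => by exact absurd (Option.some.inj hc) (by omega))
        have hder : der (MvPolynomial.pderiv (some 0) (MvPolynomial.X (some j)
            : MvPolynomial (Option ℕ) ℂ)) = 0 := by
          rcases eq_or_ne j 0 with hj | hj
          · subst hj
            rw [pderiv_X_self]
            exact der.map_one_eq_zero
          · rw [pderiv_X_of_ne (fun hc => hj (Option.some.inj hc))]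
            exact map_zero der
        rw [hW, hder]
        simp
  have := DFunLike.congr_fun h f
  rw [Derivation.commutator_apply] at this
  simpa [sub_eq_zero] using this

lemma pd_der_succ (k : ℕ) (f : MvPolynomial (Option ℕ) ℂ) :
    MvPolynomial.pderiv (some (k + 1)) (der f)
      = der (MvPolynomial.pderiv (some (k + 1)) f) + MvPolynomial.pderiv (some k) f := by
  have h : ⁅(MvPolynomial.pderiv (σ := Option ℕ) (R := ℂ) (some (k + 1))), der⁆
      = MvPolynomial.pderiv (some k) := by
    apply derivation_ext
    intro v
    rw [Derivation.commutator_apply]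
    cases v with
    | none =>
        rw [der_X]
        show MvPolynomial.pderiv (some (k + 1)) (W none)
          - der (MvPolynomial.pderiv (some (k + 1)) (MvPolynomial.X (none : Option ℕ))) = _
        rw [pderiv_X_of_ne (by simp), W_none]
        simp [pderiv_pow, pderiv_X_of_ne]
    | some j =>
        rw [der_X]
        show MvPolynomial.pderiv (some (k + 1)) (W (some j))
          - der (MvPolynomial.pderiv (some (k + 1)) (MvPolynomial.X (some j))) = _
        have hder : der (MvPolynomial.pderiv (some (k + 1)) (MvPolynomial.X (some j)
            : MvPolynomial (Option ℕ) ℂ)) = 0 := by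
          rcases eq_or_ne j (k + 1) with hj | hj
          · subst hj
            rw [pderiv_X_self]
            exact der.map_one_eq_zero
          · rw [pderiv_X_of_ne (fun hc => hj (Option.some.inj hc))]
            exact map_zero der
        rw [hder, W_some, sub_zero]
        rcases eq_or_ne j k with hj | hj
        · subst hj
          rw [pderiv_X_self, pderiv_X_self]
        · rw [pderiv_X_of_ne (fun hc => hj (by have := Option.some.inj hc; omega)), pderiv_X_of_ne
            (fun hc => hj (Option.some.inj hc))]
  have := DFunLike.congr_fun h f
  rw [Derivation.commutator_apply] at this
  rw [← this]; ring

/-- The Euler–Lagrange operator `∑_{k≤N} (-1)^k ∂_x^k ∘ ∂/∂u_k`. -/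
noncomputable def EL (N : ℕ) :
    MvPolynomial (Option ℕ) ℂ →ₗ[ℂ] MvPolynomial (Option ℕ) ℂ :=
  ∑ k ∈ Finset.range (N + 1),
    ((-1 : ℂ) ^ k) •
      ((der.toLinearMap ^ k) ∘ₗ (MvPolynomial.pderiv (σ := Option ℕ) (R := ℂ) (some k)).toLinearMap)

lemma EL_apply (N : ℕ) (f : MvPolynomial (Option ℕ) ℂ) :
    EL N f = ∑ k ∈ Finset.range (N + 1),
      ((-1 : ℂ) ^ k) • (der.toLinearMap ^ k) (MvPolynomial.pderiv (some k) f) := by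
  rw [EL, LinearMap.sum_apply]
  refine Finset.sum_congr rfl fun k _ => ?_
  rw [LinearMap.smul_apply, LinearMap.comp_apply]
  rfl

lemma EL_C (N : ℕ) (a : ℂ) : EL N (MvPolynomial.C a) = 0 := by
  rw [EL_apply]
  refine Finset.sum_eq_zero fun k _ => ?_
  rw [pderiv_C, map_zero, smul_zero]

lemma EL_Ct (N : ℕ) (b : ℂ) :
    EL N (MvPolynomial.C b * MvPolynomial.X (none : Option ℕ)) = 0 := by
  rw [EL_apply]
  refine Finset.sum_eq_zero fun k _ => ?_
  rw [pderiv_C_mul, pderiv_X_of_ne (by simp), mul_zero, map_zero, smul_zero]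

lemma pow_der_apply (k : ℕ) (x : MvPolynomial (Option ℕ) ℂ) :
    (der.toLinearMap ^ k) (der x) = (der.toLinearMap ^ (k + 1)) x := by
  rw [pow_succ, Module.End.mul_apply]
  rfl

lemma EL_der (N : ℕ) (g : MvPolynomial (Option ℕ) ℂ)
    (hg : MvPolynomial.pderiv (some N) g = 0) : EL N (der g) = 0 := by
  set A : ℕ → MvPolynomial (Option ℕ) ℂ :=
    fun k => ((-1 : ℂ) ^ k) • (der.toLinearMap ^ (k + 1)) (MvPolynomial.pderiv (some k) g)
    with hA
  have hAN : A N = 0 := by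
    simp only [hA, hg, map_zero, smul_zero]
  rw [EL_apply]
  have hsplit : ∑ k ∈ Finset.range (N + 1),
      ((-1 : ℂ) ^ k) • (der.toLinearMap ^ k) (MvPolynomial.pderiv (some k) (der g))
      = (∑ k ∈ Finset.range N,
          ((-1 : ℂ) ^ (k + 1)) • (der.toLinearMap ^ (k + 1))
            (MvPolynomial.pderiv (some (k + 1)) (der g)))
        + ((-1 : ℂ) ^ 0) • (der.toLinearMap ^ 0) (MvPolynomial.pderiv (some 0) (der g)) :=
    Finset.sum_range_succ' _ N
  rw [hsplit]
  have hstep : ∀ k ∈ Finset.range N,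
      ((-1 : ℂ) ^ (k + 1)) • (der.toLinearMap ^ (k + 1))
          (MvPolynomial.pderiv (some (k + 1)) (der g)) = A (k + 1) - A k := by
    intro k _
    rw [pd_der_succ, map_add, pow_der_apply, smul_add]
    simp only [hA]
    rw [sub_eq_add_neg]
    congr 1
    rw [pow_succ, mul_comm ((-1 : ℂ) ^ k) (-1), mul_smul, neg_one_smul]
  have h0 : ((-1 : ℂ) ^ 0) • (der.toLinearMap ^ 0) (MvPolynomial.pderiv (some 0) (der g))
      = A 0 := by
    simp only [hA, pow_zero, one_smul, Module.End.one_apply, pow_one]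
    rw [pd_der_zero]
    rfl
  rw [Finset.sum_congr rfl hstep, h0, Finset.sum_range_sub, hAN]
  abel

lemma EL_mono (N : ℕ) (hN : 1 ≤ N) (z : ℂ) (n m : ℕ) (hn : 1 ≤ n) (hm : 1 ≤ m) :
    EL N (MvPolynomial.C z * MvPolynomial.X (some 0) ^ n * MvPolynomial.X (some 1) *
        MvPolynomial.X (none : Option ℕ) ^ m)
      = MvPolynomial.C (z * m) * MvPolynomial.X (some 0) ^ n *
          MvPolynomial.X (none : Option ℕ) ^ (m + 1) := by
  obtain ⟨n', rfl⟩ : ∃ n', n = n' + 1 := ⟨n - 1, by omega⟩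
  obtain ⟨m', rfl⟩ : ∃ m', m = m' + 1 := ⟨m - 1, by omega⟩
  rw [EL_apply]
  have hzero : ∀ k ∈ Finset.range (N + 1), k ∉ Finset.range 2 →
      ((-1 : ℂ) ^ k) • (der.toLinearMap ^ k) (MvPolynomial.pderiv (some k)
        (MvPolynomial.C z * MvPolynomial.X (some 0) ^ (n' + 1) * MvPolynomial.X (some 1) *
          MvPolynomial.X (none : Option ℕ) ^ (m' + 1))) = 0 := by
    intro k _ hk
    simp only [Finset.mem_range, not_lt] at hk
    have h0 : MvPolynomial.pderiv (some k) (MvPolynomial.X (some 0) : MvPolynomial (Option ℕ) ℂ)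
        = 0 := pderiv_X_of_ne (fun hc => by exact absurd (Option.some.inj hc) (by omega))
    have h1 : MvPolynomial.pderiv (some k) (MvPolynomial.X (some 1) : MvPolynomial (Option ℕ) ℂ)
        = 0 := pderiv_X_of_ne (fun hc => by exact absurd (Option.some.inj hc) (by omega))
    have ht : MvPolynomial.pderiv (some k)
        (MvPolynomial.X (none : Option ℕ) : MvPolynomial (Option ℕ) ℂ) = 0 :=
      pderiv_X_of_ne (by simp)
    rw [pderiv_mul, pderiv_mul, pderiv_mul, pderiv_C, pderiv_pow, pderiv_pow, h0, h1, ht]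
    simp
  rw [← Finset.sum_subset (Finset.range_subset_range.mpr (by omega)) hzero]
  rw [Finset.sum_range_succ, Finset.sum_range_succ, Finset.sum_range_zero, zero_add]
  have hP0 : MvPolynomial.pderiv (some 0)
      (MvPolynomial.C z * MvPolynomial.X (some 0) ^ (n' + 1) * MvPolynomial.X (some 1) *
        MvPolynomial.X (none : Option ℕ) ^ (m' + 1))
      = ((n' : MvPolynomial (Option ℕ) ℂ) + 1) * MvPolynomial.C z *
          MvPolynomial.X (some 0) ^ n' * MvPolynomial.X (some 1) *
          MvPolynomial.X (none : Option ℕ) ^ (m' + 1) := by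
    rw [pderiv_mul, pderiv_mul, pderiv_mul, pderiv_C, pderiv_pow, pderiv_pow,
      pderiv_X_self, pderiv_X_of_ne (by simp), pderiv_X_of_ne (by simp)]
    push_cast
    ring
  have hP1 : MvPolynomial.pderiv (some 1)
      (MvPolynomial.C z * MvPolynomial.X (some 0) ^ (n' + 1) * MvPolynomial.X (some 1) *
        MvPolynomial.X (none : Option ℕ) ^ (m' + 1))
      = MvPolynomial.C z * MvPolynomial.X (some 0) ^ (n' + 1) *
          MvPolynomial.X (none : Option ℕ) ^ (m' + 1) := by
    rw [pderiv_mul, pderiv_mul, pderiv_mul, pderiv_C, pderiv_pow, pderiv_pow,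
      pderiv_X_self, pderiv_X_of_ne (by simp), pderiv_X_of_ne (by simp)]
    ring
  have hD : der (MvPolynomial.C z * MvPolynomial.X (some 0) ^ (n' + 1) *
      MvPolynomial.X (none : Option ℕ) ^ (m' + 1))
      = ((n' : MvPolynomial (Option ℕ) ℂ) + 1) * MvPolynomial.C z *
          MvPolynomial.X (some 0) ^ n' * MvPolynomial.X (some 1) *
          MvPolynomial.X (none : Option ℕ) ^ (m' + 1)
        + ((m' : MvPolynomial (Option ℕ) ℂ) + 1) * MvPolynomial.C z *
            MvPolynomial.X (some 0) ^ (n' + 1) * MvPolynomial.X (none : Option ℕ) ^ m' *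
            (-(MvPolynomial.X (none : Option ℕ)) ^ 2) := by
    rw [Derivation.leibniz, Derivation.leibniz, Derivation.leibniz_pow, Derivation.leibniz_pow,
      der_X, der_X, W_some, W_none, derivation_C]
    simp only [smul_eq_mul, nsmul_eq_mul]
    push_cast
    ring
  rw [hP0, hP1]
  simp only [pow_zero, one_smul, Module.End.one_apply, pow_one, neg_one_smul]
  have hT1 : der.toLinearMap
      (MvPolynomial.C z * MvPolynomial.X (some 0) ^ (n' + 1) *
        MvPolynomial.X (none : Option ℕ) ^ (m' + 1))
      = der (MvPolynomial.C z * MvPolynomial.X (some 0) ^ (n' + 1) *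
        MvPolynomial.X (none : Option ℕ) ^ (m' + 1)) := rfl
  rw [hT1, hD]
  rw [show ((m' + 1 : ℕ) : ℂ) = ((m' : ℂ) + 1) by push_cast; ring, map_mul]
  rw [show MvPolynomial.C ((m' : ℂ) + 1)
      = ((m' : MvPolynomial (Option ℕ) ℂ) + 1) by
    rw [map_add, map_one, MvPolynomial.C_eq_coe_nat]]
  ring

end SingAux

open SingAux

/-- The singular local functionals `∫ u_0^n u_1 x^{-m} dx` for `n, m ≥ 1` are linearly
independent: if a finite linear combination `∑ c_{n,m} u_0^n u_1 x^{-m}` lies in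
`Im(∂_x) ⊕ ℂ ⊕ ℂ·x⁻¹` inside `ℂ[[u_0]][u_1,u_2,…,x⁻¹]`, then all `c_{n,m} = 0`. -/
theorem singular_functionals_linearly_independent (c : ℕ × ℕ →₀ ℂ)
    (hsupp : ∀ p ∈ c.support, 1 ≤ p.1 ∧ 1 ≤ p.2)
    (g : MvPolynomial (Option ℕ) ℂ) (a b : ℂ)
    (h : ∑ p ∈ c.support,
        MvPolynomial.C (c p) * (MvPolynomial.X (some 0)) ^ p.1 *
          MvPolynomial.X (some 1) * (MvPolynomial.X (none : Option ℕ)) ^ p.2 =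
      singDx g + MvPolynomial.C a + MvPolynomial.C b * MvPolynomial.X (none : Option ℕ)) :
    c = 0 := by
  classical
  set N : ℕ := (g.vars.sup fun v => Option.getD v 0) + 1 with hNdef
  have hNg : MvPolynomial.pderiv (some N) g = 0 := by
    apply pderiv_eq_zero_of_notMem_vars
    intro hmem
    have := Finset.le_sup (f := fun v : Option ℕ => Option.getD v 0) hmem
    simp only [Option.getD_some] at this
    omega
  have hN1 : 1 ≤ N := by omega
  rw [singDx_eq_der] at h
  have hEL := congrArg (EL N) h
  rw [map_add, map_add, EL_der N g hNg, EL_C, EL_Ct, add_zero, add_zero,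
    map_sum] at hEL
  have hEL2 : ∑ p ∈ c.support,
      MvPolynomial.C (c p * p.2) * MvPolynomial.X (some 0) ^ p.1 *
        MvPolynomial.X (none : Option ℕ) ^ (p.2 + 1) = 0 := by
    rw [← hEL]
    refine Finset.sum_congr rfl fun p hp => ?_
    exact (EL_mono N hN1 (c p) p.1 p.2 (hsupp p hp).1 (hsupp p hp).2).symm
  have hmono : ∀ p : ℕ × ℕ,
      MvPolynomial.C (c p * p.2) * MvPolynomial.X (some 0) ^ p.1 *
          MvPolynomial.X (none : Option ℕ) ^ (p.2 + 1)
        = MvPolynomial.monomial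
            (Finsupp.single (some 0 : Option ℕ) p.1 + Finsupp.single (none : Option ℕ) (p.2 + 1))
            (c p * p.2) := by
    intro p
    rw [MvPolynomial.X_pow_eq_monomial, MvPolynomial.X_pow_eq_monomial,
      MvPolynomial.C_mul_monomial, MvPolynomial.monomial_mul, mul_one, mul_one]
  rw [Finset.sum_congr rfl fun p _ => hmono p] at hEL2
  ext p
  simp only [Finsupp.coe_zero, Pi.zero_apply]
  by_cases hp : p ∈ c.support
  · have hco := congrArg (MvPolynomial.coeff
      (Finsupp.single (some 0 : Option ℕ) p.1 + Finsupp.single (none : Option ℕ) (p.2 + 1))) hEL2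
    rw [MvPolynomial.coeff_sum] at hco
    simp only [MvPolynomial.coeff_monomial, MvPolynomial.coeff_zero] at hco
    rw [Finset.sum_eq_single p] at hco
    · rw [if_pos rfl] at hco
      have hp2 : (p.2 : ℂ) ≠ 0 := Nat.cast_ne_zero.mpr (by have := (hsupp p hp).2; omega)
      exact (mul_eq_zero.mp hco).resolve_right hp2
    · intro q _ hq
      rw [if_neg]
      intro heq
      apply hq
      have h1 := DFunLike.congr_fun heq (some 0 : Option ℕ)
      have h2 := DFunLike.congr_fun heq (none : Option ℕ)
      simp only [Finsupp.add_apply, Finsupp.single_eq_same,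
        Finsupp.single_eq_of_ne (by simp : (none : Option ℕ) ≠ some 0),
        Finsupp.single_eq_of_ne (by simp : (some 0 : Option ℕ) ≠ none)] at h1 h2
      exact Prod.ext (by omega) (by omega)
    · exact fun h => absurd hp h
  · exact Finsupp.notMem_support_iff.mp hp
end
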